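/- Let θ : BS(2,3) → BS(2,3) be the unique group homomorphism with θ(a) = a⁻⁵ and θ(t) = t. Then the subgroup ⋂_{k=1}^∞ im θ^k of BS(2,3) is a free group and is not finitely generated (hence it is a free group of infinite rank). -/

import Mathlib

open Multiplicative

/-- `ℤ[1/6]` as an additive subgroup of `ℚ`. -/
def Z16 : AddSubgroup ℚ where
  carrier := {q : ℚ | ∃ (m : ℤ) (k : ℕ), q = m / 6 ^ k}
  zero_mem' := ⟨0, 0, by norm_num⟩
  add_mem' := by
    rintro a b ⟨m, k, rfl⟩ ⟨m', k', rfl⟩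
    refine ⟨m * 6 ^ k' + m' * 6 ^ k, k + k', ?_⟩
    push_cast
    rw [pow_add]
    field_simp
  neg_mem' := by
    rintro a ⟨m, k, rfl⟩
    exact ⟨-m, k, by push_cast; ring⟩

/-- Multiplication by `3/2` as an additive automorphism of `ℤ[1/6]`. -/
def mul32 : Z16 ≃+ Z16 where
  toFun q := ⟨(3 / 2 : ℚ) * q, by
    obtain ⟨m, k, hq⟩ := q.2
    refine ⟨9 * m, k + 1, ?_⟩
    rw [hq]; push_cast; rw [pow_succ]; field_simp; ring⟩
  invFun q := ⟨(2 / 3 : ℚ) * q, by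
    obtain ⟨m, k, hq⟩ := q.2
    refine ⟨4 * m, k + 1, ?_⟩
    rw [hq]; push_cast; rw [pow_succ]; field_simp; ring⟩
  left_inv q := Subtype.ext (by
    show (2 / 3 : ℚ) * ((3 / 2 : ℚ) * (q : ℚ)) = (q : ℚ)
    ring)
  right_inv q := Subtype.ext (by
    show (3 / 2 : ℚ) * ((2 / 3 : ℚ) * (q : ℚ)) = (q : ℚ)
    ring)
  map_add' a b := Subtype.ext (by push_cast; ring)

/-- The action of `ℤ` on `ℤ[1/6]` in which `1` acts by multiplication by `3/2`. -/
def phiQ : Multiplicative ℤ →* MulAut (Multiplicative Z16) :=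
  zpowersHom (MulAut (Multiplicative Z16)) (AddEquiv.toMultiplicative mul32)

/-- The group `Q(2,3) = ℤ[1/6] ⋊ ℤ`, where the generator `1 ∈ ℤ` acts on `ℤ[1/6]` by
multiplication by `3/2`. -/
abbrev Q23 : Type := SemidirectProduct (Multiplicative Z16) (Multiplicative ℤ) phiQ

/-- The element `(1, 0)` of `Q(2,3)`. -/
def Qa : Q23 := SemidirectProduct.inl (ofAdd (⟨1, 1, 0, by norm_num⟩ : Z16))

/-- The element `(0, 1)` of `Q(2,3)`. -/
def Qt : Q23 := SemidirectProduct.inr (ofAdd (1 : ℤ))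

/-- The single relator `t a² t⁻¹ a⁻³` of the Baumslag–Solitar group `BS(2,3)`,
with generator `0` playing the role of `a` and generator `1` the role of `t`. -/
def BSrels : Set (FreeGroup (Fin 2)) :=
  {FreeGroup.of 1 * FreeGroup.of 0 ^ 2 * (FreeGroup.of 1)⁻¹ * (FreeGroup.of 0 ^ 3)⁻¹}

/-- The Baumslag–Solitar group `BS(2,3) = ⟨a, t ∣ t a² t⁻¹ = a³⟩`. -/
abbrev BS23 : Type := PresentedGroup BSrels

/-- The generator `a` of `BS(2,3)`. -/
def BSa : BS23 := PresentedGroup.of 0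

/-- The generator `t` of `BS(2,3)`. -/
def BSt : BS23 := PresentedGroup.of 1

/-- The `k`-th iterate of a group endomorphism. -/
def iterHom {G : Type*} [Group G] (f : G →* G) : ℕ → (G →* G)
  | 0 => MonoidHom.id G
  | k + 1 => (iterHom f k).comp f

/-!
Let `BS(2,3)` act on `ℚ` by `a : x ↦ x + 1`, `t : x ↦ 3x/2`. The image of `θᵏ` is
`Hₖ = ⟨a^((-5)^k), t⟩`, which preserves `5ᵏ ℤ[1/6]`. Since `2` and `3` are prime to `5`, every
element of `BS(2,3)` is `a^j h` with `h ∈ Hₖ`; if it fixes `0`, then `j ∈ 5ᵏ ℤ[1/6] ∩ ℤ = 5ᵏ ℤ`,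
so it lies in `Hₖ`. As `⋂ₖ 5ᵏ ℤ[1/6] = 0` (`5`-adic valuation), the intersection of the images is
the stabiliser `N` of `0`.

Lift the action to `ℚ × F`, with `F` free on `ℚ/2ℤ`, letting `t` multiply the second
coordinate by the letter `[x]` of its source point `x`. On `N` the second coordinate of `g (0, 1)`
is a homomorphism `N → F`. Along a Britton-reduced word consecutive letters never cancel, so it is
injective and `N` is free by Nielsen–Schreier. Finitely many elements of `N` involve only
finitely many letters, whereas the conjugate `h⁻¹ ⁅t⁻¹at, a⁆ h` (which lies in `N` because the
commutator acts trivially on `ℚ`) has exponent sum `-1` in the letter `[h 0]`, and `[h 0]` takes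
infinitely many values; so `N` is not finitely generated.
-/

open Equiv Pointwise
open scoped commutatorElement

section iterHom

variable {G : Type*} [Group G] (f : G →* G) {x : G}

theorem iterHom_apply_of_apply_eq_zpow {n : ℤ} (h : f x = x ^ n) (k : ℕ) :
    iterHom f k x = x ^ (n ^ k) := by
  induction k with
  | zero => simp [iterHom]
  | succ k ih =>
    rw [iterHom, MonoidHom.comp_apply, h, map_zpow, ih, ← zpow_mul, pow_succ]

theorem iterHom_apply_of_apply_eq_self (h : f x = x) (k : ℕ) : iterHom f k x = x := by
  simpa using iterHom_apply_of_apply_eq_zpow f (n := 1) (by simpa using h) k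

end iterHom

theorem one_mem_Z16 : (1 : ℚ) ∈ Z16 := ⟨1, 0, by norm_num⟩

theorem three_halves_mul_mem_Z16_iff {q : ℚ} : 3 / 2 * q ∈ Z16 ↔ q ∈ Z16 := by
  refine ⟨fun h ↦ ?_, fun h ↦ (mul32 ⟨q, h⟩).2⟩
  convert (mul32.symm ⟨3 / 2 * q, h⟩).2 using 1
  change q = 2 / 3 * (3 / 2 * q)
  ring

theorem padicValRat_five_nonneg_of_mem_Z16 {q : ℚ} (hq : q ∈ Z16) : 0 ≤ padicValRat 5 q := by
  have := Fact.mk (show Nat.Prime 5 by norm_num)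
  obtain ⟨m, i, rfl⟩ := hq
  rcases eq_or_ne m 0 with rfl | hm
  · simp
  have h6 : padicValRat 5 (6 : ℚ) = 0 := by
    have h := padicValRat.of_nat (p := 5) (n := 6)
    rw [padicValNat.eq_zero_of_not_dvd (by norm_num)] at h
    exact_mod_cast h
  rw [padicValRat.div (by exact_mod_cast hm) (by positivity), padicValRat.pow, h6,
    padicValRat.of_int]
  simp

abbrev RatModTwo : Type := ℚ ⧸ AddSubgroup.zmultiples (2 : ℚ)

theorem ratModTwo_add_eq_self_iff (x r : ℚ) :
    ((x + r : ℚ) : RatModTwo) = x ↔ ∃ k : ℤ, r = 2 * k := by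
  rw [QuotientAddGroup.eq_iff_sub_mem, add_sub_cancel_left, AddSubgroup.mem_zmultiples_iff]
  simp [eq_comm, mul_comm]

theorem ratModTwo_add_two_mul (x : ℚ) (k : ℤ) : ((x + 2 * k : ℚ) : RatModTwo) = x :=
  (ratModTwo_add_eq_self_iff x _).2 ⟨k, rfl⟩

theorem ratModTwo_sub_ne_self {x r : ℚ} (hr : ∀ k : ℤ, r ≠ 2 * k) :
    ((x - r : ℚ) : RatModTwo) ≠ x := by
  rw [sub_eq_add_neg, Ne, ratModTwo_add_eq_self_iff]
  rintro ⟨k, hk⟩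
  exact hr (-k) (by push_cast; linarith)

theorem den_eq_of_ratModTwo_eq {a b : ℚ} (h : (a : RatModTwo) = b) : a.den = b.den := by
  obtain ⟨k, hk⟩ := (ratModTwo_add_eq_self_iff b (a - b)).1 (by rwa [add_sub_cancel])
  rw [← add_sub_cancel b a, hk]
  exact_mod_cast Rat.add_intCast_den b (2 * k)

def precompInv (X M : Type*) [Group M] : Perm X →* MulAut (X → M) where
  toFun σ :=
    { toFun := fun c ↦ c ∘ σ.symm
      invFun := fun c ↦ c ∘ σ
      left_inv := fun c ↦ by ext; simp
      right_inv := fun c ↦ by ext; simp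
      map_mul' := fun _ _ ↦ rfl }
  map_one' := rfl
  map_mul' _ _ := rfl

@[simp] theorem precompInv_apply {X M : Type*} [Group M] (σ : Perm X) (c : X → M) (x : X) :
    precompInv X M σ c x = c (σ⁻¹ x) := rfl

@[simp] theorem precompInv_symm_apply {X M : Type*} [Group M] (σ : Perm X) (c : X → M) (x : X) :
    (precompInv X M σ).symm c x = c (σ x) := rfl

section exponentSum

variable {α : Type*} [DecidableEq α]

def FreeGroup.exponentSum (p : α) : FreeGroup α →* Multiplicative ℤ :=
  FreeGroup.lift (Pi.mulSingle p (ofAdd 1))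

theorem FreeGroup.exponentSum_of_self (p : α) : exponentSum p (of p) = ofAdd 1 := by
  simp [exponentSum]

theorem FreeGroup.exponentSum_of_of_ne {p q : α} (h : q ≠ p) : exponentSum p (of q) = 1 := by
  simp [exponentSum, h]

theorem FreeGroup.exponentSum_eq_one_of_forall_mem_toWord {p : α} {w : FreeGroup α}
    (h : ∀ l ∈ w.toWord, l.1 ≠ p) : exponentSum p w = 1 := by
  rw [exponentSum, ← mk_toWord (x := w), lift_mk]
  refine List.prod_eq_one fun x hx ↦ ?_
  obtain ⟨l, hl, rfl⟩ := List.mem_map.1 hx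
  cases l.2 <;> simp [Pi.mulSingle_eq_of_ne (h l hl)]

end exponentSum

namespace BS23

theorem BSt_mul_BSa_sq_mul_BSt_inv : BSt * BSa ^ 2 * BSt⁻¹ = BSa ^ 3 := by
  have h : PresentedGroup.mk BSrels
      (FreeGroup.of 1 * FreeGroup.of 0 ^ 2 * (FreeGroup.of 1)⁻¹ * (FreeGroup.of 0 ^ 3)⁻¹) = 1 :=
    (QuotientGroup.eq_one_iff _).2 (Subgroup.subset_normalClosure rfl)
  simp only [map_mul, map_inv, map_pow, mul_inv_eq_one] at h
  exact h

def signedT (e : Bool) : BS23 := cond e BSt BSt⁻¹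

def bsIndex (e : Bool) : ℤ := cond e 2 3

theorem signedT_mul_signedT_not (e : Bool) : signedT e * signedT (!e) = 1 := by
  cases e <;> simp [signedT]

theorem signedT_mul_BSa_zpow (e : Bool) (c : ℤ) :
    signedT e * BSa ^ (bsIndex e * c) = BSa ^ (bsIndex (!e) * c) * signedT e := by
  have hconj : BSt * BSa ^ (2 * c) * BSt⁻¹ = BSa ^ (3 * c) := by
    rw [zpow_mul, zpow_mul, ← conj_zpow]
    exact_mod_cast congrArg (· ^ c) BSt_mul_BSa_sq_mul_BSt_inv
  cases e <;> simp only [signedT, bsIndex, cond_false, cond_true, Bool.not_false,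
    Bool.not_true] <;> rw [← hconj] <;> group

theorem signedT_mul_BSa_zpow_mul_signedT_not (e : Bool) (c : ℤ) :
    signedT e * BSa ^ (bsIndex e * c) * signedT (!e) = BSa ^ (bsIndex (!e) * c) := by
  rw [signedT_mul_BSa_zpow, mul_assoc, signedT_mul_signedT_not, mul_one]

theorem closure_BSa_BSt : Subgroup.closure {BSa, BSt} = ⊤ := by
  rw [← PresentedGroup.closure_range_of BSrels]
  congr 1
  ext g
  simp [Fin.exists_fin_two, BSa, BSt, eq_comm]

theorem induction_left {p : BS23 → Prop} (one : p 1)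
    (zpow_mul : ∀ (n : ℤ) g, p g → p (BSa ^ n * g))
    (signedT_mul : ∀ e g, p g → p (signedT e * g)) (g : BS23) : p g := by
  have hg : g ∈ Subgroup.closure {BSa, BSt} := closure_BSa_BSt ▸ Subgroup.mem_top g
  induction hg using Subgroup.closure_induction_left with
  | one => exact one
  | mul_left x hx y _ ih =>
    rcases hx with rfl | rfl
    · simpa using zpow_mul 1 y ih
    · exact signedT_mul true y ih
  | inv_mul_cancel x hx y _ ih =>
    rcases hx with rfl | rfl
    · simpa using zpow_mul (-1) y ih
    · exact signedT_mul false y ih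

def affineAction : BS23 →* Perm ℚ :=
  PresentedGroup.toGroup (f := ![Equiv.addRight 1, Equiv.mulLeft₀ (3 / 2) (by norm_num)]) <| by
    rintro r rfl
    ext x
    simp [Perm.mul_apply]
    ring

@[simp] theorem affineAction_BSa_zpow (n : ℤ) (x : ℚ) : affineAction (BSa ^ n) x = x + n := by
  simp [affineAction, BSa]

@[simp] theorem affineAction_BSa (x : ℚ) : affineAction BSa x = x + 1 := by
  simpa using affineAction_BSa_zpow 1 x

@[simp] theorem affineAction_BSa_inv (x : ℚ) : affineAction BSa⁻¹ x = x - 1 := by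
  simpa [sub_eq_add_neg] using affineAction_BSa_zpow (-1) x

@[simp] theorem affineAction_BSt (x : ℚ) : affineAction BSt x = 3 / 2 * x := by
  simp [affineAction, BSt]

@[simp] theorem affineAction_BSt_inv (x : ℚ) : affineAction BSt⁻¹ x = 2 / 3 * x := by
  simp [affineAction, BSt]

theorem affineAction_BSt_pow (j : ℕ) (x : ℚ) : affineAction (BSt ^ j) x = (3 / 2) ^ j * x := by
  induction j generalizing x with
  | zero => simp
  | succ j ih => rw [pow_succ, map_mul, Perm.mul_apply, affineAction_BSt, ih]; ring

def stabilizerZero : Subgroup BS23 := (MulAction.stabilizer (Perm ℚ) (0 : ℚ)).comap affineAction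

theorem mem_stabilizerZero {g : BS23} : g ∈ stabilizerZero ↔ affineAction g 0 = 0 := Iff.rfl

theorem range_iterHom {θ : BS23 →* BS23} (hθa : θ BSa = BSa ^ (-5 : ℤ)) (hθt : θ BSt = BSt)
    (k : ℕ) : (iterHom θ k).range = Subgroup.closure {BSa ^ ((-5 : ℤ) ^ k), BSt} := by
  rw [MonoidHom.range_eq_map, ← closure_BSa_BSt, MonoidHom.map_closure, Set.image_pair,
    iterHom_apply_of_apply_eq_zpow θ hθa, iterHom_apply_of_apply_eq_self θ hθt]

/-- `n ℤ[1/6]` for `n ≠ 0`; the junk value `q / 0 = 0` makes `scaledZ16 0 = ℚ`. -/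
def scaledZ16 (n : ℤ) : Set ℚ := {q | q / n ∈ Z16}

theorem zero_mem_scaledZ16 (n : ℤ) : (0 : ℚ) ∈ scaledZ16 n := by
  simp [scaledZ16, Z16.zero_mem]

theorem closure_le_comap_stabilizer_scaledZ16 (n : ℤ) :
    Subgroup.closure {BSa ^ n, BSt} ≤
      (MulAction.stabilizer (Perm ℚ) (scaledZ16 n)).comap affineAction := by
  rw [Subgroup.closure_le]
  rintro g (rfl | rfl) <;> simp only [SetLike.mem_coe, Subgroup.mem_comap,
    MulAction.mem_stabilizer_set, Perm.smul_def] <;> intro x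
  · simp only [affineAction_BSa_zpow, scaledZ16, Set.mem_ofPred_eq]
    rcases eq_or_ne (n : ℚ) 0 with hn | hn
    · simp [hn]
    · rw [add_div, div_self hn]
      exact Z16.add_mem_cancel_right one_mem_Z16
  · simp only [affineAction_BSt, scaledZ16, Set.mem_ofPred_eq, mul_div_assoc]
    exact three_halves_mul_mem_Z16_iff

theorem dvd_of_intCast_mem_scaledZ16 {n j : ℤ} (hn : IsCoprime n 6)
    (hj : (j : ℚ) ∈ scaledZ16 n) : n ∣ j := by
  obtain ⟨m, i, hmi⟩ := hj
  have hn0 : (n : ℚ) ≠ 0 := by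
    rintro h
    simp [Int.cast_eq_zero.1 h, Int.isCoprime_iff_gcd_eq_one] at hn
  have hint : j * 6 ^ i = n * m := by
    field_simp at hmi
    exact_mod_cast hmi
  exact (hn.pow_right (n := i)).dvd_of_dvd_mul_right ⟨m, hint⟩

theorem eq_zero_of_forall_mem_scaledZ16 {q : ℚ}
    (hq : ∀ k : ℕ, q ∈ scaledZ16 ((-5) ^ (k + 1))) : q = 0 := by
  have := Fact.mk (show Nat.Prime 5 by norm_num)
  have h5 : padicValRat 5 (5 : ℚ) = 1 := by exact_mod_cast padicValRat.self (p := 5) (by norm_num)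
  by_contra hq0
  obtain ⟨k, hk⟩ := exists_nat_gt (padicValRat 5 q)
  have hz : q / (-5) ^ (k + 1) ∈ Z16 := by simpa [scaledZ16] using hq k
  have hval : padicValRat 5 q = k + 1 + padicValRat 5 (q / (-5) ^ (k + 1)) := by
    conv_lhs => rw [← mul_div_cancel₀ q (pow_ne_zero (k + 1) (by norm_num : (-5 : ℚ) ≠ 0))]
    rw [padicValRat.mul (by positivity) (div_ne_zero hq0 (by positivity)), padicValRat.pow,
      padicValRat.neg, h5]
    push_cast
    ring
  linarith [padicValRat_five_nonneg_of_mem_Z16 hz]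

theorem exists_zpow_mul_mem {n : ℤ} (hn : IsCoprime n 6) {H : Subgroup BS23}
    (ha : BSa ^ n ∈ H) (ht : BSt ∈ H) (g : BS23) : ∃ j : ℤ, BSa ^ j * g ∈ H := by
  have hcop : ∀ e, IsCoprime (bsIndex e) n := by
    have := IsCoprime.mul_right_iff.1 (show IsCoprime n (2 * 3) by simpa using hn)
    intro e; cases e
    exacts [this.2.symm, this.1.symm]
  induction g using induction_left with
  | one => exact ⟨0, by simp⟩
  | zpow_mul m g ih =>
    obtain ⟨j, hj⟩ := ih
    exact ⟨j - m, by simpa [← mul_assoc, ← zpow_add] using hj⟩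
  | signedT_mul e g ih =>
    obtain ⟨j, hj⟩ := ih
    obtain ⟨u, v, huv⟩ := hcop e
    -- `a ^ (bsIndex e * c)` passes through `signedT e`, and `a ^ (n * d) ∈ H`
    obtain ⟨c, d, hsplit⟩ : ∃ c d, -j = bsIndex e * c + n * d :=
      ⟨-j * u, -j * v, by linear_combination j * huv⟩
    refine ⟨-(bsIndex (!e) * c), ?_⟩
    have hmem : signedT e * (BSa ^ n) ^ d * (BSa ^ j * g) ∈ H := by
      refine H.mul_mem (H.mul_mem ?_ (H.zpow_mem ha d)) hj
      cases e
      exacts [H.inv_mem ht, ht]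
    convert hmem using 1
    calc BSa ^ (-(bsIndex (!e) * c)) * (signedT e * g)
        = BSa ^ (-(bsIndex (!e) * c)) * (signedT e * BSa ^ (-j)) * (BSa ^ j * g) := by group
      _ = BSa ^ (-(bsIndex (!e) * c)) * (signedT e * BSa ^ (bsIndex e * c))
            * (BSa ^ n) ^ d * (BSa ^ j * g) := by
          rw [hsplit, zpow_add, ← zpow_mul]; group
      _ = signedT e * (BSa ^ n) ^ d * (BSa ^ j * g) := by
          rw [signedT_mul_BSa_zpow]; group

theorem stabilizerZero_le_closure {n : ℤ} (hn : IsCoprime n 6) :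
    stabilizerZero ≤ Subgroup.closure {BSa ^ n, BSt} := by
  intro g hg
  obtain ⟨j, hj⟩ := exists_zpow_mul_mem hn (H := Subgroup.closure {BSa ^ n, BSt})
    (Subgroup.subset_closure (Set.mem_insert _ _))
    (Subgroup.subset_closure (Set.mem_insert_of_mem _ rfl)) g
  have hjmem : (j : ℚ) ∈ scaledZ16 n := by
    have := (MulAction.mem_stabilizer_set.1 (closure_le_comap_stabilizer_scaledZ16 n hj) 0).2
      (zero_mem_scaledZ16 n)
    rwa [Perm.smul_def, map_mul, Perm.mul_apply, mem_stabilizerZero.1 hg, affineAction_BSa_zpow,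
      zero_add] at this
  obtain ⟨c, rfl⟩ := dvd_of_intCast_mem_scaledZ16 hn hjmem
  have hpow : BSa ^ (n * c) ∈ Subgroup.closure {BSa ^ n, BSt} := by
    rw [zpow_mul]; exact Subgroup.zpow_mem _ (Subgroup.subset_closure (Set.mem_insert _ _)) c
  simpa using Subgroup.mul_mem _ (Subgroup.inv_mem _ hpow) hj

theorem iInf_range_iterHom {θ : BS23 →* BS23} (hθa : θ BSa = BSa ^ (-5 : ℤ))
    (hθt : θ BSt = BSt) : ⨅ k : ℕ, (iterHom θ (k + 1)).range = stabilizerZero := by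
  refine le_antisymm (fun g hg ↦ ?_) (le_iInf fun k ↦ ?_)
  · refine mem_stabilizerZero.2 (eq_zero_of_forall_mem_scaledZ16 fun k ↦ ?_)
    have hgk := closure_le_comap_stabilizer_scaledZ16 _
      (range_iterHom hθa hθt (k + 1) ▸ Subgroup.mem_iInf.1 hg k)
    simpa [Perm.smul_def, zero_mem_scaledZ16] using MulAction.mem_stabilizer_set.1 hgk 0
  · rw [range_iterHom hθa hθt]
    exact stabilizerZero_le_closure (IsCoprime.pow_left ⟨1, 1, by norm_num⟩)

section crossing

variable {M : Type*} [Group M] (f : RatModTwo → M)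

/-- The action `a (x, m) = (x + 1, m)`, `t (x, m) = (3x/2, f [x] * m)` on `ℚ × M`, as a map to the
wreath product. The function component is indexed by the image point, so `t` carries
`y ↦ f [2y/3]`; the relation holds because `f` only sees classes mod `2`. -/
def crossingHom : BS23 →* (ℚ → M) ⋊[precompInv ℚ M] Perm ℚ :=
  PresentedGroup.toGroup (f := ![SemidirectProduct.inr (Equiv.addRight 1),
    ⟨fun y ↦ f (2 / 3 * y : ℚ), Equiv.mulLeft₀ (3 / 2) (by norm_num)⟩]) <| by
    rintro r rfl
    simp only [map_mul, map_pow, map_inv, FreeGroup.lift_apply_of, Matrix.cons_val_zero,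
      Matrix.cons_val_one, mul_inv_eq_one]
    rw [← map_pow, ← map_pow]
    ext y
    · simp [SemidirectProduct.mul_left, SemidirectProduct.inv_left]
      rw [show 2 / 3 * (3 / 2 * (2 / 3 * y + -2)) = 2 / 3 * y + 2 * ((-1 : ℤ) : ℚ) by push_cast; ring,
        ratModTwo_add_two_mul, mul_inv_cancel]
    · simp [Perm.mul_apply]
      ring

@[simp] theorem crossingHom_right (g : BS23) : (crossingHom f g).right = affineAction g := by
  suffices SemidirectProduct.rightHom.comp (crossingHom f) = affineAction from
    DFunLike.congr_fun this g
  ext i x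
  fin_cases i <;> simp [crossingHom, affineAction]

/-- The `M`-component of `g (x, 1)`: the labels picked up along the path of `x`. -/
def crossing (g : BS23) (x : ℚ) : M := (crossingHom f g).left (affineAction g x)

theorem crossing_mul (g h : BS23) (x : ℚ) :
    crossing f (g * h) x = crossing f g (affineAction h x) * crossing f h x := by
  simp [crossing, SemidirectProduct.mul_left, Perm.mul_apply]

@[simp] theorem crossing_one (x : ℚ) : crossing f 1 x = 1 := by
  simp [crossing]

theorem crossing_inv (g : BS23) (x : ℚ) :
    crossing f g⁻¹ x = (crossing f g (affineAction g⁻¹ x))⁻¹ := by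
  rw [eq_comm, inv_eq_iff_mul_eq_one, ← crossing_mul, mul_inv_cancel, crossing_one]

@[simp] theorem crossing_BSa_zpow (n : ℤ) (x : ℚ) : crossing f (BSa ^ n) x = 1 := by
  have ha : crossingHom f BSa = SemidirectProduct.inr (Equiv.addRight 1) :=
    PresentedGroup.toGroup.of _
  rw [crossing, map_zpow, ha, ← map_zpow, SemidirectProduct.left_inr]
  rfl

@[simp] theorem crossing_BSa (x : ℚ) : crossing f BSa x = 1 := by
  simpa using crossing_BSa_zpow f 1 x

@[simp] theorem crossing_BSa_inv (x : ℚ) : crossing f BSa⁻¹ x = 1 := by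
  simpa using crossing_BSa_zpow f (-1) x

@[simp] theorem crossing_BSt (x : ℚ) : crossing f BSt x = f x := by
  have ht : crossingHom f BSt = ⟨fun y ↦ f (2 / 3 * y : ℚ), Equiv.mulLeft₀ (3 / 2) (by norm_num)⟩ :=
    PresentedGroup.toGroup.of _
  rw [crossing, ht, affineAction_BSt]
  change f (2 / 3 * (3 / 2 * x) : ℚ) = f x
  rw [← mul_assoc]
  norm_num

@[simp] theorem crossing_BSt_inv (x : ℚ) : crossing f BSt⁻¹ x = (f (2 / 3 * x : ℚ))⁻¹ := by
  rw [crossing_inv, crossing_BSt, affineAction_BSt_inv]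

theorem crossing_inv_mul_mul {g h : BS23} {x : ℚ}
    (hg : affineAction g (affineAction h x) = affineAction h x) :
    crossing f (h⁻¹ * g * h) x =
      (crossing f h x)⁻¹ * crossing f g (affineAction h x) * crossing f h x := by
  simp [crossing_mul, crossing_inv, hg]

def stabilizerCrossing : stabilizerZero →* M where
  toFun g := crossing f g 0
  map_one' := crossing_one f 0
  map_mul' g h := by simp [crossing_mul, mem_stabilizerZero.1 h.2]

end crossing

def syllableProd (L : List (Bool × ℤ)) : BS23 := (L.map fun s ↦ signedT s.1 * BSa ^ s.2).prod

@[simp] theorem syllableProd_nil : syllableProd [] = 1 := rfl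

@[simp] theorem syllableProd_cons (e : Bool) (m : ℤ) (L : List (Bool × ℤ)) :
    syllableProd ((e, m) :: L) = signedT e * BSa ^ m * syllableProd L := by
  simp [syllableProd, mul_assoc]

/-- Britton's pinch `t^e a^m t^(-e)`, which collapses to a power of `a`. -/
def Pinch (s s' : Bool × ℤ) : Prop := s.1 ≠ s'.1 ∧ bsIndex s.1 ∣ s.2

def IsPinchFree (L : List (Bool × ℤ)) : Prop := L.IsChain fun s s' ↦ ¬ Pinch s s'

theorem exists_eq_zpow_mul_syllableProd (g : BS23) :
    ∃ (n : ℤ) (L : List (Bool × ℤ)), IsPinchFree L ∧ g = BSa ^ n * syllableProd L := by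
  induction g using induction_left with
  | one => exact ⟨0, [], List.IsChain.nil, by simp⟩
  | zpow_mul m g ih =>
    obtain ⟨n, L, hL, rfl⟩ := ih
    exact ⟨m + n, L, hL, by rw [zpow_add, mul_assoc]⟩
  | signedT_mul e g ih =>
    obtain ⟨n, L, hL, rfl⟩ := ih
    rcases L with _ | ⟨⟨e', m'⟩, L'⟩
    · exact ⟨0, [(e, n)], List.isChain_singleton _, by simp⟩
    by_cases hp : Pinch (e, n) (e', m')
    · obtain ⟨he', c, hc⟩ := hp
      dsimp only at he' hc
      subst hc
      obtain rfl : e' = !e := by cases e <;> cases e' <;> simp_all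
      refine ⟨bsIndex (!e) * c + m', L', hL.tail, ?_⟩
      rw [zpow_add, ← signedT_mul_BSa_zpow_mul_signedT_not e c, syllableProd_cons]
      group
    · exact ⟨0, (e, n) :: (e', m') :: L', hL.cons_cons hp, by simp [mul_assoc]⟩

theorem crossing_signedT (e : Bool) (y : ℚ) :
    crossing FreeGroup.of (signedT e) y =
      FreeGroup.mk [(((cond e y (2 / 3 * y) : ℚ) : RatModTwo), e)] := by
  cases e
  · simp [signedT, FreeGroup.of, FreeGroup.inv_mk, FreeGroup.invRev]
  · simp [signedT, FreeGroup.of]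

def crossLetters : List (Bool × ℤ) → ℚ → List (RatModTwo × Bool)
  | [], _ => []
  | (e, m) :: L, x =>
    let y := affineAction (syllableProd L) x + m
    ((cond e y (2 / 3 * y) : ℚ), e) :: crossLetters L x

theorem crossing_syllableProd (L : List (Bool × ℤ)) (x : ℚ) :
    crossing FreeGroup.of (syllableProd L) x = FreeGroup.mk (crossLetters L x) := by
  induction L with
  | nil => simp [crossLetters, FreeGroup.one_eq_mk]
  | cons s L ih =>
    obtain ⟨e, m⟩ := s
    simp only [syllableProd_cons, crossing_mul, crossing_BSa_zpow, mul_one, ih, crossing_signedT,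
      affineAction_BSa_zpow, FreeGroup.mul_mk, crossLetters]
    rfl

theorem isReduced_crossLetters {L : List (Bool × ℤ)} (hL : IsPinchFree L) (x : ℚ) :
    FreeGroup.IsReduced (crossLetters L x) := by
  induction L with
  | nil => exact FreeGroup.IsReduced.nil
  | cons s L ih =>
    obtain ⟨e, m⟩ := s
    rcases L with _ | ⟨⟨e', m'⟩, L⟩
    · exact FreeGroup.IsReduced.singleton
    obtain ⟨hpinch, hL'⟩ := List.isChain_cons_cons.1 hL
    refine FreeGroup.isReduced_cons_cons.2 ⟨fun hp ↦ ?_, ih hL'⟩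
    by_contra he
    refine hpinch ⟨he, ?_⟩
    simp only [syllableProd_cons, map_mul, Perm.mul_apply, affineAction_BSa_zpow] at hp
    generalize affineAction (syllableProd L) x + m' = z at hp
    -- the letters are `[2z/3 + m]`, `[2z/3]` for `(t, t⁻¹)` and `[z + 2m/3]`, `[z]` for `(t⁻¹, t)`
    obtain rfl : e' = !e := by cases e <;> cases e' <;> simp_all
    cases e <;> simp only [signedT, bsIndex, cond_true, cond_false, Bool.not_true,
      Bool.not_false, affineAction_BSt, affineAction_BSt_inv] at hp ⊢
    · rw [show 2 / 3 * (3 / 2 * z + m) = z + 2 / 3 * m by ring,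
        ratModTwo_add_eq_self_iff] at hp
      obtain ⟨k, hk⟩ := hp
      exact ⟨k, by field_simp at hk; exact_mod_cast hk⟩
    · obtain ⟨k, hk⟩ := (ratModTwo_add_eq_self_iff _ _).1 hp
      exact ⟨k, by exact_mod_cast hk⟩

theorem stabilizerCrossing_injective :
    Function.Injective (stabilizerCrossing (FreeGroup.of : RatModTwo → FreeGroup RatModTwo)) := by
  refine (injective_iff_map_eq_one _).2 fun ⟨g, hg⟩ h1 ↦ ?_
  obtain ⟨n, L, hL, rfl⟩ := exists_eq_zpow_mul_syllableProd g
  have hword : FreeGroup.mk (crossLetters L 0) = 1 := by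
    simpa [stabilizerCrossing, crossing_mul, crossing_syllableProd] using h1
  have hnil : crossLetters L 0 = [] := by
    rw [← (isReduced_crossLetters hL 0).reduce_eq, ← FreeGroup.toWord_mk, hword,
      FreeGroup.toWord_one]
  rcases L with _ | ⟨⟨e, m⟩, L⟩
  · have hn := mem_stabilizerZero.1 hg
    rw [syllableProd_nil, mul_one, affineAction_BSa_zpow, zero_add] at hn
    ext
    simp [Int.cast_eq_zero.1 hn]
  · simp [crossLetters] at hnil

theorem exists_mulEquiv_freeGroup : ∃ ι : Type, Nonempty (stabilizerZero ≃* FreeGroup ι) := by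
  obtain ⟨ι, ⟨b⟩⟩ :=
    (subgroupIsFreeOfIsFree (stabilizerCrossing (FreeGroup.of : RatModTwo → _)).range).nonempty_basis
  exact ⟨ι, ⟨(MonoidHom.ofInjective stabilizerCrossing_injective).trans b.repr⟩⟩

theorem infinite_range_ratModTwo_affineAction :
    (Set.range fun h : BS23 ↦ ((affineAction h 0 : ℚ) : RatModTwo)).Infinite := by
  refine Set.infinite_of_injective_forall_mem (f := fun j : ℕ ↦ (((3 / 2 : ℚ) ^ j : ℚ) : RatModTwo))
    (fun i j hij ↦ Nat.pow_right_injective le_rfl ?_) fun j ↦ ⟨BSt ^ j * BSa, ?_⟩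
  · simpa [Rat.den_pow, show (3 / 2 : ℚ).den = 2 by norm_num] using den_eq_of_ratModTwo_eq hij
  · simp only [map_mul, Perm.mul_apply, affineAction_BSt_pow, affineAction_BSa, zero_add, mul_one]

theorem affineAction_commutator : affineAction ⁅BSt⁻¹ * BSa * BSt, BSa⁆ = 1 := by
  ext x
  simp only [commutatorElement_def, mul_inv_rev, inv_inv, map_mul, Perm.mul_apply,
    affineAction_BSa, affineAction_BSa_inv, affineAction_BSt, affineAction_BSt_inv, Perm.one_apply]
  ring

theorem crossing_commutator {M : Type*} [Group M] (f : RatModTwo → M) (y : ℚ) :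
    crossing f ⁅BSt⁻¹ * BSa * BSt, BSa⁆ y =
      (f y)⁻¹ * f (y - 2 / 3 : ℚ) * (f (y - 5 / 3 : ℚ))⁻¹ * f (y - 1 : ℚ) := by
  simp only [commutatorElement_def, mul_inv_rev, inv_inv, crossing_mul, map_mul, Perm.mul_apply,
    crossing_BSt, crossing_BSt_inv, crossing_BSa, crossing_BSa_inv, affineAction_BSa,
    affineAction_BSa_inv, affineAction_BSt, affineAction_BSt_inv, mul_one, one_mul, mul_assoc]
  ring_nf

theorem inv_mul_commutator_mul_mem_stabilizerZero (h : BS23) :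
    h⁻¹ * ⁅BSt⁻¹ * BSa * BSt, BSa⁆ * h ∈ stabilizerZero := by
  rw [mem_stabilizerZero, map_mul, map_mul, affineAction_commutator, mul_one, map_inv,
    inv_mul_cancel, Perm.one_apply]

theorem exponentSum_stabilizerCrossing_conj_commutator [DecidableEq RatModTwo] (h : BS23) :
    FreeGroup.exponentSum ((affineAction h 0 : ℚ) : RatModTwo)
      (stabilizerCrossing FreeGroup.of ⟨_, inv_mul_commutator_mul_mem_stabilizerZero h⟩) =
      ofAdd (-1) := by
  have hfix : affineAction ⁅BSt⁻¹ * BSa * BSt, BSa⁆ (affineAction h 0) = affineAction h 0 := by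
    rw [affineAction_commutator, Perm.one_apply]
  have hne : ∀ r : ℚ, (∀ k : ℤ, r ≠ 2 * k) → FreeGroup.exponentSum ((affineAction h 0 : ℚ) :
      RatModTwo) (FreeGroup.of ((affineAction h 0 - r : ℚ) : RatModTwo)) = 1 :=
    fun r hr ↦ FreeGroup.exponentSum_of_of_ne (ratModTwo_sub_ne_self hr)
  change FreeGroup.exponentSum _ (crossing _ (h⁻¹ * _ * h) 0) = _
  rw [crossing_inv_mul_mul _ hfix, crossing_commutator]
  simp only [map_mul, map_inv, FreeGroup.exponentSum_of_self]
  rw [hne (2 / 3) ?_, hne (5 / 3) ?_, hne 1 ?_]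
  · rw [mul_comm]; simp
  all_goals intro k hk; field_simp at hk; norm_cast at hk; omega

theorem not_fg_stabilizerZero : ¬ Group.FG stabilizerZero := by
  classical
  rintro ⟨S, hS⟩
  set Φ := stabilizerCrossing (FreeGroup.of : RatModTwo → FreeGroup RatModTwo)
  let T : Finset RatModTwo := S.biUnion fun s ↦ ((Φ s).toWord.map Prod.fst).toFinset
  obtain ⟨_, ⟨h, rfl⟩, hpT⟩ := infinite_range_ratModTwo_affineAction.exists_notMem_finset T
  dsimp only at hpT
  have hχ : (FreeGroup.exponentSum ((affineAction h 0 : ℚ) : RatModTwo)).comp Φ = 1 := by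
    refine MonoidHom.eq_of_eqOn_dense hS fun s hs ↦
      FreeGroup.exponentSum_eq_one_of_forall_mem_toWord fun l hl hl1 ↦ hpT ?_
    exact hl1 ▸ Finset.mem_biUnion.2 ⟨s, hs, List.mem_toFinset.2 (List.mem_map_of_mem hl)⟩
  have := exponentSum_stabilizerCrossing_conj_commutator h
  rw [← MonoidHom.comp_apply, hχ] at this
  exact absurd (ofAdd_eq_one.1 this.symm) (by norm_num)

end BS23

/-- **Proposition.** With `θ : BS(2,3) → BS(2,3)` the homomorphism determined by
`θ(a) = a⁻⁵` and `θ(t) = t`, the subgroup `⋂_{k≥1} im θᵏ` of `BS(2,3)` is a free group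
and is not finitely generated. -/
theorem BS23_intersection_iterates_free_not_fg
    (θ : BS23 →* BS23) (hθa : θ BSa = BSa ^ (-5 : ℤ)) (hθt : θ BSt = BSt) :
    (∃ ι : Type, Nonempty (↥(⨅ k : ℕ, (iterHom θ (k + 1)).range) ≃* FreeGroup ι)) ∧
      ¬ Group.FG ↥(⨅ k : ℕ, (iterHom θ (k + 1)).range) := by
  rw [BS23.iInf_range_iterHom hθa hθt]
  exact ⟨BS23.exists_mulEquiv_freeGroup, BS23.not_fg_stabilizerZero⟩
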